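/- Let 𝙰 and 𝙲 be finite sets, φ : 𝙰^G → 𝙲 a continuous map with induced equivariant map Φ : 𝙰^G → 𝙲^G, and Y ⊆ 𝙲^G a subshift. If (μ_n)_{n≥1} is a sequence of shift-invariant Borel probability measures on 𝙰^G converging weak* to a shift-invariant Borel probability measure μ, and Φ_*μ_n(Y) = 1 for all n, then f^Y_μ(φ) ≥ limsup_{n→∞} f^Y_{μ_n}(φ). -/
import Mathlib


/- Claim (C:us): upper semicontinuity of μ ↦ f^Y_μ(φ) along weak* convergent sequences
   of shift-invariant measures whose pushforwards are supported on Y. -/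

open MeasureTheory Filter
open scoped ENNReal NNReal

namespace Stmt3

abbrev G (r : ℕ) : Type := FreeGroup (Fin r)

instance (r : ℕ) : Countable (G r) := FreeGroup.toWord_injective.countable

/-- The left shift action of `G`: `(g·x)(f) = x(g⁻¹ f)`. -/
def shift (r : ℕ) {A : Type} (g : G r) (x : G r → A) : G r → A := fun f => x (g⁻¹ * f)

/-- The equivariant map induced by an observable `φ`: `Φ(x)(g) = φ(g⁻¹·x)`. -/
def Phi (r : ℕ) {A C : Type} (φ : (G r → A) → C) (x : G r → A) : G r → C :=
  fun g => φ (shift r g⁻¹ x)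

/-- The pullback name `ψ^σ_v(g) = ψ(σ(g)⁻¹ v)`. -/
def pull (r : ℕ) {n : ℕ} {C : Type} (σ : G r →* Equiv.Perm (Fin n))
    (ψ : Fin n → C) (v : Fin n) : G r → C :=
  fun g => ψ ((σ g)⁻¹ v)

/-- The empirical distribution `P^σ_ψ = (1/n) Σ_v δ_{ψ^σ_v}` (as a measure). -/
noncomputable def empMeas (r : ℕ) {n : ℕ} {C : Type} [MeasurableSpace C]
    (σ : G r →* Equiv.Perm (Fin n)) (ψ : Fin n → C) : Measure (G r → C) :=
  (n : ℝ≥0∞)⁻¹ • ∑ v : Fin n, Measure.dirac (pull r σ ψ v)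

/-- `Ω_Y(σ,𝒰)`. -/
def OmegaY (r : ℕ) {n : ℕ} {C : Type} [Fintype C] [TopologicalSpace C]
    [DiscreteTopology C] [MeasurableSpace C] [BorelSpace C]
    (Y : Set (G r → C)) (σ : G r →* Equiv.Perm (Fin n))
    (U : Set (ProbabilityMeasure (G r → C))) : Set (Fin n → C) :=
  {ψ | ∃ h : IsProbabilityMeasure (empMeas r σ ψ),
    (⟨empMeas r σ ψ, h⟩ : ProbabilityMeasure (G r → C)) ∈ U ∧ empMeas r σ ψ Y = 1}

/-- `f^Y` of a measure `ν` on `𝙲^G` (to be applied to `ν = Φ_*μ`):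
`inf_{𝒰 ∋ ν} limsup_n (1/n) log E_{σ∼u_n} |Ω_Y(σ,𝒰)|`. -/
noncomputable def fY (r : ℕ) {C : Type} [Fintype C] [TopologicalSpace C]
    [DiscreteTopology C] [MeasurableSpace C] [BorelSpace C]
    (ν : ProbabilityMeasure (G r → C)) (Y : Set (G r → C)) : EReal :=
  ⨅ U : {U : Set (ProbabilityMeasure (G r → C)) // IsOpen U ∧ ν ∈ U},
    Filter.limsup (fun n : ℕ =>
      (((n : ℝ)⁻¹ : ℝ) : EReal) *
        ENNReal.log
          ((∑ f : Fin r → Equiv.Perm (Fin n),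
            ((OmegaY r Y (FreeGroup.lift f) U.val).ncard : ℝ≥0∞)) /
            ((n.factorial : ℝ≥0∞)) ^ r))
      Filter.atTop

/-- A subshift: a closed shift-invariant subset. -/
def IsSubshift (r : ℕ) {C : Type} [TopologicalSpace C] (Y : Set (G r → C)) : Prop :=
  IsClosed Y ∧ ∀ g : G r, shift r g '' Y = Y

/-- Claim `C:us`.  If shift-invariant `μ_k → μ` weak* and each
`Φ_*μ_k` is supported on the subshift `Y`, then
`f^Y_μ(φ) ≥ limsup_k f^Y_{μ_k}(φ)`. -/
theorem statement3 (r : ℕ) (hr : 1 ≤ r) {A C : Type}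
    [Fintype A] [TopologicalSpace A] [DiscreteTopology A] [MeasurableSpace A]
    [BorelSpace A]
    [Fintype C] [TopologicalSpace C] [DiscreteTopology C] [MeasurableSpace C]
    [BorelSpace C]
    (φ : (G r → A) → C) (hφ : Continuous φ)
    (Y : Set (G r → C)) (hY : IsSubshift r Y)
    (μseq : ℕ → ProbabilityMeasure (G r → A)) (μ : ProbabilityMeasure (G r → A))
    (hinvseq : ∀ (k : ℕ) (g : G r),
      (μseq k).toMeasure.map (shift r g) = (μseq k).toMeasure)
    (hinv : ∀ g : G r, μ.toMeasure.map (shift r g) = μ.toMeasure)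
    (hconv : Filter.Tendsto μseq Filter.atTop (nhds μ))
    (νseq : ℕ → ProbabilityMeasure (G r → C)) (ν : ProbabilityMeasure (G r → C))
    (hνseq : ∀ k : ℕ, (νseq k).toMeasure = (μseq k).toMeasure.map (Phi r φ))
    (hν : ν.toMeasure = μ.toMeasure.map (Phi r φ))
    (hsupp : ∀ k : ℕ, (νseq k).toMeasure Y = 1) :
    Filter.limsup (fun k : ℕ => fY r (νseq k) Y) Filter.atTop ≤ fY r ν Y := by
  have hPhi : Continuous (Phi r φ) :=
    continuous_pi fun g => hφ.comp (continuous_pi fun f => continuous_apply _)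
  have heq : ∀ k, νseq k = (μseq k).map hPhi.measurable.aemeasurable := fun k =>
    ProbabilityMeasure.toMeasure_injective (by
      rw [ProbabilityMeasure.toMeasure_map]; exact hνseq k)
  have hνeq : ν = μ.map hPhi.measurable.aemeasurable :=
    ProbabilityMeasure.toMeasure_injective (by
      rw [ProbabilityMeasure.toMeasure_map]; exact hν)
  have htend : Filter.Tendsto νseq Filter.atTop (nhds ν) := by
    rw [funext heq, hνeq]
    exact ProbabilityMeasure.tendsto_map_of_tendsto_of_continuous μseq μ hconv hPhi
  refine le_iInf fun U => ?_
  have hev : ∀ᶠ k in Filter.atTop, νseq k ∈ U.1 :=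
    htend (U.2.1.mem_nhds U.2.2)
  refine Filter.limsup_le_of_le (by isBoundedDefault) ?_
  filter_upwards [hev] with k hk
  exact iInf_le (ι := {U : Set (ProbabilityMeasure (G r → C)) // IsOpen U ∧ νseq k ∈ U})
    _ ⟨U.1, U.2.1, hk⟩

end Stmt3
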